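/- For every n ∈ ℕ and all (x,ξ) ∈ ℝ², the Wigner function of the n-th Hermite function with itself satisfies H_1(H_n, H_n)(x,ξ) = 2 (−1)^n e^{−(x²+ξ²)} L_n(2(x²+ξ²)). -/

import Mathlib

open MeasureTheory

noncomputable section

/-- The `n`-th Laguerre polynomial `L_n(x) = Σ_{k=0}^n (n choose k) (−x)^k / k!`. -/
def laguerreFun (n : ℕ) (x : ℝ) : ℝ :=
  ∑ k ∈ Finset.range (n + 1), (n.choose k : ℝ) * (-x) ^ k / (k.factorial : ℝ)

/-- The `n`-th Hermite function. -/
def hermiteFun (n : ℕ) (x : ℝ) : ℝ :=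
  (Real.sqrt (2 ^ n * n.factorial * Real.sqrt Real.pi))⁻¹ * (-1) ^ n *
    Real.exp (x ^ 2 / 2) * iteratedDeriv n (fun y => Real.exp (-y ^ 2)) x

/-- The one-dimensional Wigner function `H_h(f, g, (x, ξ))`. -/
def wigner1 (h : ℝ) (f g : ℝ → ℂ) (x ξ : ℝ) : ℂ :=
  ∫ t : ℝ, Complex.exp (-(Complex.I / (h : ℂ)) * ((t * ξ : ℝ) : ℂ)) *
    f (x + t / 2) * (starRingEnd ℂ) (g (x - t / 2))

/-!
The `n`-th Hermite function is `c_n H_n(y) e^{-y²/2}`, with `H_n` the physicists' Hermite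
polynomial. Substituting `t = 2s` and completing the square, the Wigner integral becomes
`2 c_n² e^{-(x²+ξ²)} Φ(p)`, where `p = H_n(X + a) H_n(b - X)`, `a = x - iξ`, `b = x + iξ`,
and `Φ(p) = ∫ p(s + iξ) e^{-(s+iξ)²} ds`.

Integration by parts shows that `Φ` kills the image of the raising operator `p ↦ 2Xp - p'`,
and `Φ 1 = √π`. For any such functional `Φ((2Xp - p') q) = Φ(p q')`, which turns the Hermite
recurrence into a two-term recurrence for the cross moments `Φ(H_m(X + a) H_j(b - X))`.
Solving it gives a binomial sum whose diagonal value is `√π (-2)^n n! L_n(2ab)`, and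
`ab = x² + ξ²`.
-/

open Polynomial Finset Complex

def physHermite (R : Type*) [CommRing R] : ℕ → R[X]
  | 0 => 1
  | n + 1 => 2 * X * physHermite R n - derivative (physHermite R n)

section physHermite

variable {R : Type*} [CommRing R]

@[simp] lemma physHermite_zero : physHermite R 0 = 1 := rfl

lemma physHermite_succ (n : ℕ) :
    physHermite R (n + 1) = 2 * X * physHermite R n - derivative (physHermite R n) := rfl

lemma derivative_physHermite_succ (n : ℕ) :
    derivative (physHermite R (n + 1)) = 2 * (n + 1 : R[X]) * physHermite R n := by
  induction n with
  | zero => simp [physHermite_succ]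
  | succ n ih =>
    rw [physHermite_succ (n + 1), derivative_sub, derivative_mul, ih, physHermite_succ n]
    simp only [derivative_mul, derivative_add, derivative_ofNat, derivative_X, derivative_natCast,
      derivative_one]
    push_cast
    ring

lemma derivative_physHermite (n : ℕ) :
    derivative (physHermite R n) = 2 * (n : R[X]) * physHermite R (n - 1) := by
  cases n with
  | zero => simp
  | succ n => simpa using derivative_physHermite_succ n

lemma physHermite_map {S : Type*} [CommRing S] (f : R →+* S) (n : ℕ) :
    (physHermite R n).map f = physHermite S n := by
  induction n with
  | zero => simp
  | succ n ih => simp [physHermite_succ, Polynomial.map_sub, ← derivative_map, ih]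

lemma physHermite_comp_X_add_C_succ (a : R) (m : ℕ) :
    (physHermite R (m + 1)).comp (X + C a) =
      (2 * X * (physHermite R m).comp (X + C a) - derivative ((physHermite R m).comp (X + C a)))
        + C (2 * a) * (physHermite R m).comp (X + C a) := by
  simp only [physHermite_succ, sub_comp, mul_comp, X_comp, ofNat_comp, derivative_comp,
    derivative_add, derivative_X, derivative_C, map_mul, map_ofNat]
  ring

lemma derivative_physHermite_comp_C_sub_X (b : R) (j : ℕ) :
    derivative ((physHermite R j).comp (C b - X)) =
      -(C (2 * j : R) * (physHermite R (j - 1)).comp (C b - X)) := by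
  simp only [derivative_comp, derivative_sub, derivative_X, derivative_C, derivative_physHermite,
    mul_comp, ofNat_comp, natCast_comp, map_mul, map_ofNat, map_natCast]
  ring

lemma physHermite_comp_C_sub_X_succ (b : R) (j : ℕ) :
    (physHermite R (j + 1)).comp (C b - X) =
      C (2 * b) * (physHermite R j).comp (C b - X)
        - (2 * X * (physHermite R j).comp (C b - X)
          - derivative ((physHermite R j).comp (C b - X))) := by
  simp only [physHermite_succ, sub_comp, mul_comp, X_comp, ofNat_comp, derivative_comp,
    derivative_sub, derivative_X, derivative_C, map_mul, map_ofNat]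
  ring

end physHermite

section RaisingOperator

variable {R : Type*} [CommRing R]

lemma LinearMap.map_C_mul (Φ : R[X] →ₗ[R] R) (r : R) (p : R[X]) : Φ (C r * p) = r * Φ p := by
  rw [← smul_eq_C_mul, map_smul, smul_eq_mul]

variable {Φ : R[X] →ₗ[R] R}

lemma map_raising_mul (hΦ : ∀ p, Φ (2 * X * p - derivative p) = 0) (p q : R[X]) :
    Φ ((2 * X * p - derivative p) * q) = Φ (p * derivative q) := by
  have h : (2 * X * p - derivative p) * q =
      (2 * X * (p * q) - derivative (p * q)) + p * derivative q := by
    rw [derivative_mul]; ring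
  rw [h, map_add, hΦ, zero_add]

lemma map_physHermite_comp_C_sub_X (hΦ : ∀ p, Φ (2 * X * p - derivative p) = 0) (b : R)
    (j : ℕ) :
    Φ ((physHermite R j).comp (C b - X)) = (2 * b) ^ j * Φ 1 := by
  induction j with
  | zero => simp
  | succ j ih =>
    have h := map_raising_mul hΦ ((physHermite R j).comp (C b - X)) 1
    rw [mul_one, derivative_one, mul_zero, map_zero] at h
    rw [physHermite_comp_C_sub_X_succ, map_sub, h, sub_zero, Φ.map_C_mul, ih]
    ring

lemma map_physHermite_comp_mul_succ (hΦ : ∀ p, Φ (2 * X * p - derivative p) = 0) (a b : R)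
    (m j : ℕ) :
    Φ ((physHermite R (m + 1)).comp (X + C a) * (physHermite R j).comp (C b - X)) =
      2 * a * Φ ((physHermite R m).comp (X + C a) * (physHermite R j).comp (C b - X))
        - 2 * j *
          Φ ((physHermite R m).comp (X + C a) * (physHermite R (j - 1)).comp (C b - X)) := by
  rw [physHermite_comp_X_add_C_succ, add_mul, map_add, map_raising_mul hΦ,
    derivative_physHermite_comp_C_sub_X]
  simp only [mul_neg, map_neg, mul_left_comm _ (C _), mul_assoc, Φ.map_C_mul]
  ring

lemma map_physHermite_comp_mul_eq_sum (hΦ : ∀ p, Φ (2 * X * p - derivative p) = 0) (a b : R)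
    (m j : ℕ) :
    Φ ((physHermite R m).comp (X + C a) * (physHermite R j).comp (C b - X)) =
      Φ 1 * ∑ kl ∈ antidiagonal m, (m.choose kl.1 : R) *
        ((2 * a) ^ kl.1 * ((-2) ^ kl.2 * j.descFactorial kl.2 * (2 * b) ^ (j - kl.2))) := by
  induction m generalizing j with
  | zero => simp [map_physHermite_comp_C_sub_X hΦ, mul_comm]
  | succ m ih =>
    rw [map_physHermite_comp_mul_succ hΦ, ih, ih, sum_antidiagonal_choose_succ_mul
      (fun k l => (2 * a) ^ k * ((-2) ^ l * j.descFactorial l * (2 * b) ^ (j - l))) m]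
    have lower : ∑ kl ∈ antidiagonal m, (m.choose kl.1 : R) * ((2 * a) ^ kl.1 *
          ((-2) ^ (kl.2 + 1) * j.descFactorial (kl.2 + 1) * (2 * b) ^ (j - (kl.2 + 1)))) =
        -(2 * j) * ∑ kl ∈ antidiagonal m, (m.choose kl.1 : R) * ((2 * a) ^ kl.1 *
          ((-2) ^ kl.2 * (j - 1).descFactorial kl.2 * (2 * b) ^ (j - 1 - kl.2))) := by
      rw [mul_sum]
      refine sum_congr rfl fun kl _ => ?_
      cases j with
      | zero => simp
      | succ j =>
        simp only [Nat.succ_descFactorial_succ, Nat.add_sub_add_right, Nat.add_sub_cancel]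
        push_cast
        ring
    have raise : ∑ kl ∈ antidiagonal m, (m.choose kl.2 : R) *
          ((2 * a) ^ (kl.1 + 1) * ((-2) ^ kl.2 * j.descFactorial kl.2 * (2 * b) ^ (j - kl.2))) =
        2 * a * ∑ kl ∈ antidiagonal m, (m.choose kl.1 : R) *
          ((2 * a) ^ kl.1 * ((-2) ^ kl.2 * j.descFactorial kl.2 * (2 * b) ^ (j - kl.2))) := by
      rw [mul_sum]
      refine sum_congr rfl fun kl hkl => ?_
      rw [← mem_antidiagonal.mp hkl, Nat.choose_symm_add]
      ring
    rw [lower, raise]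
    ring

end RaisingOperator

lemma sum_antidiagonal_choose_descFactorial {K : Type*} [Field K] [CharZero K] (a b : K)
    (n : ℕ) :
    ∑ kl ∈ antidiagonal n, (n.choose kl.1 : K) *
        ((2 * a) ^ kl.1 * ((-2) ^ kl.2 * n.descFactorial kl.2 * (2 * b) ^ (n - kl.2))) =
      (-2) ^ n * n.factorial *
        ∑ k ∈ range (n + 1), (n.choose k : K) * (-(2 * a * b)) ^ k / k.factorial := by
  rw [Nat.sum_antidiagonal_eq_sum_range_succ_mk, mul_sum]
  refine sum_congr rfl fun k hk => ?_
  obtain ⟨l, rfl⟩ := Nat.exists_eq_add_of_le (Nat.lt_succ_iff.mp (mem_range.mp hk))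
  have hfact : (k.factorial : K) * (k + l).descFactorial l = (k + l).factorial := by
    have h := Nat.factorial_mul_descFactorial (Nat.le_add_left l k)
    rw [Nat.add_sub_cancel] at h
    exact_mod_cast h
  simp only [Nat.add_sub_cancel_left, Nat.add_sub_cancel]
  have hk : (k.factorial : K) ≠ 0 := Nat.cast_ne_zero.mpr k.factorial_ne_zero
  have hsign : ((-2 : K) ^ k) * (-1) ^ k = 2 ^ k := by rw [← mul_pow]; norm_num
  rw [← hfact, pow_add, neg_pow (2 * a * b)]
  field_simp
  linear_combination ((k + l).choose k * (2 * a * b) ^ k : K) * hsign.symm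

lemma integrable_cexp_neg_sq_add_mul (w c : ℂ) :
    Integrable fun s : ℝ => cexp (-(s + w) ^ 2 + c * s) := by
  convert integrable_cexp_quadratic (b := 1) (by norm_num) (c - 2 * w) (-w ^ 2) using 3
  ring

lemma norm_pow_mul_cexp_neg_sq_add_le (k : ℕ) (w : ℂ) (s : ℝ) :
    ‖(s : ℂ) ^ k * cexp (-(s + w) ^ 2)‖ ≤
      k.factorial * (‖cexp (-(s + w) ^ 2 + 1 * s)‖ + ‖cexp (-(s + w) ^ 2 + (-1) * s)‖) := by
  have hpow : |s| ^ k ≤ k.factorial * Real.exp |s| := by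
    have := Real.pow_div_factorial_le_exp _ (abs_nonneg s) k
    rwa [div_le_iff₀' (by positivity)] at this
  have hexp : Real.exp |s| ≤ Real.exp s + Real.exp (-s) := by
    rcases abs_choice s with h | h <;> rw [h] <;> linarith [Real.exp_pos s, Real.exp_pos (-s)]
  simp only [one_mul, neg_one_mul, Complex.exp_add, norm_mul, norm_pow, norm_real,
    Real.norm_eq_abs, ← ofReal_neg, norm_exp_ofReal]
  calc |s| ^ k * ‖cexp (-(s + w) ^ 2)‖
      ≤ k.factorial * (Real.exp s + Real.exp (-s)) * ‖cexp (-(s + w) ^ 2)‖ := by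
        gcongr; exact hpow.trans (by gcongr)
    _ = _ := by ring

lemma integrable_pow_mul_cexp_neg_sq_add (k : ℕ) (w : ℂ) :
    Integrable fun s : ℝ => (s : ℂ) ^ k * cexp (-(s + w) ^ 2) :=
  Integrable.mono' (((integrable_cexp_neg_sq_add_mul w 1).norm.add
      (integrable_cexp_neg_sq_add_mul w (-1)).norm).const_mul _)
    (by fun_prop) (.of_forall (norm_pow_mul_cexp_neg_sq_add_le k w))

lemma integrable_eval_mul_cexp_neg_sq_add (p : ℂ[X]) (w : ℂ) :
    Integrable fun s : ℝ => p.eval (s + w) * cexp (-(s + w) ^ 2) := by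
  have h (s : ℝ) : p.eval (s + w) = (p.comp (X + C w)).eval (s : ℂ) := by simp
  simp_rw [h, eval_eq_sum_range, sum_mul, mul_assoc]
  exact integrable_finsetSum _ fun i _ => (integrable_pow_mul_cexp_neg_sq_add i w).const_mul _

def gaussianLineIntegral (w : ℂ) : ℂ[X] →ₗ[ℂ] ℂ where
  toFun p := ∫ s : ℝ, p.eval (s + w) * cexp (-(s + w) ^ 2)
  map_add' p q := by
    simp only [eval_add, add_mul]
    exact integral_add (integrable_eval_mul_cexp_neg_sq_add p w)
      (integrable_eval_mul_cexp_neg_sq_add q w)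
  map_smul' c p := by
    simp only [eval_smul, smul_eq_mul, mul_assoc, RingHom.id_apply]
    exact integral_const_mul c _

lemma gaussianLineIntegral_apply (w : ℂ) (p : ℂ[X]) :
    gaussianLineIntegral w p = ∫ s : ℝ, p.eval (s + w) * cexp (-(s + w) ^ 2) := rfl

lemma gaussianLineIntegral_one (w : ℂ) : gaussianLineIntegral w 1 = Real.sqrt Real.pi := by
  have h := integral_cexp_quadratic (b := -1) (by norm_num) (-2 * w) (-w ^ 2)
  have hpi : (Real.pi : ℂ) ^ (1 / 2 : ℂ) = (Real.sqrt Real.pi : ℝ) := by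
    rw [Real.sqrt_eq_rpow, ofReal_cpow Real.pi_pos.le]; norm_num
  rw [gaussianLineIntegral_apply]
  convert h using 1
  · simp only [eval_one, one_mul]; congr 1; ext s; congr 1; ring
  · rw [← hpi, show -w ^ 2 - (-2 * w) ^ 2 / (4 * -1) = 0 by ring]
    norm_num

lemma gaussianLineIntegral_raising (w : ℂ) (p : ℂ[X]) :
    gaussianLineIntegral w (2 * X * p - derivative p) = 0 := by
  have hderiv (s : ℝ) : HasDerivAt (fun s : ℝ => p.eval (s + w) * cexp (-(s + w) ^ 2))
      (-((2 * X * p - derivative p).eval (s + w) * cexp (-(s + w) ^ 2))) s := by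
    have hF : HasDerivAt (fun z => p.eval z * cexp (-z ^ 2))
        ((derivative p).eval (s + w) * cexp (-(s + w) ^ 2) +
          p.eval (s + w) * (cexp (-(s + w) ^ 2) * (-(2 * (s + w))))) (s + w) := by
      refine (p.hasDerivAt _).mul (HasDerivAt.cexp ?_)
      simpa using (hasDerivAt_pow 2 ((s : ℂ) + w)).fun_neg
    convert (hF.comp_add_const (s : ℂ) w).comp_ofReal using 1
    simp only [eval_sub, eval_mul, eval_X, eval_ofNat]
    ring
  have h := integral_eq_zero_of_hasDerivAt_of_integrable hderiv
    (integrable_eval_mul_cexp_neg_sq_add _ w).neg (integrable_eval_mul_cexp_neg_sq_add p w)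
  rwa [integral_neg, neg_eq_zero] at h

lemma gaussianLineIntegral_physHermite_comp_mul (w a b : ℂ) (n : ℕ) :
    gaussianLineIntegral w
        ((physHermite ℂ n).comp (X + C a) * (physHermite ℂ n).comp (C b - X)) =
      Real.sqrt Real.pi * ((-2) ^ n * n.factorial *
        ∑ k ∈ range (n + 1), (n.choose k : ℂ) * (-(2 * a * b)) ^ k / k.factorial) := by
  rw [map_physHermite_comp_mul_eq_sum (gaussianLineIntegral_raising w), gaussianLineIntegral_one,
    sum_antidiagonal_choose_descFactorial]

lemma iteratedDeriv_exp_neg_sq (n : ℕ) :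
    iteratedDeriv n (fun y : ℝ => Real.exp (-y ^ 2)) =
      fun y => (-1) ^ n * (physHermite ℝ n).eval y * Real.exp (-y ^ 2) := by
  induction n with
  | zero => simp
  | succ n ih =>
    ext y
    have hq : HasDerivAt (fun y : ℝ => -y ^ 2) (-(2 * y)) y := by
      simpa using (hasDerivAt_pow 2 y).fun_neg
    rw [iteratedDeriv_succ, ih,
      ((((physHermite ℝ n).hasDerivAt y).const_mul ((-1) ^ n)).fun_mul hq.exp).deriv,
      physHermite_succ]
    simp only [eval_sub, eval_mul, eval_X, eval_ofNat]
    ring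

def hermiteNormConst (n : ℕ) : ℝ := (Real.sqrt (2 ^ n * n.factorial * Real.sqrt Real.pi))⁻¹

lemma hermiteNormConst_sq_mul (n : ℕ) :
    hermiteNormConst n ^ 2 * (2 ^ n * n.factorial * Real.sqrt Real.pi) = 1 := by
  rw [hermiteNormConst, inv_pow, Real.sq_sqrt (by positivity), inv_mul_cancel₀ (by positivity)]

lemma hermiteFun_eq (n : ℕ) (y : ℝ) :
    hermiteFun n y = hermiteNormConst n * (physHermite ℝ n).eval y * Real.exp (-y ^ 2 / 2) := by
  have hsign : ((-1 : ℝ) ^ n) ^ 2 = 1 := by rw [← pow_mul, pow_mul']; norm_num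
  rw [hermiteFun, hermiteNormConst, iteratedDeriv_exp_neg_sq,
    show -y ^ 2 / 2 = y ^ 2 / 2 + -y ^ 2 by ring, Real.exp_add]
  linear_combination (Real.sqrt (2 ^ n * n.factorial * Real.sqrt Real.pi))⁻¹ *
    (physHermite ℝ n).eval y * Real.exp (y ^ 2 / 2) * Real.exp (-y ^ 2) * hsign

lemma ofReal_eval_physHermite (n : ℕ) (y : ℝ) :
    (((physHermite ℝ n).eval y : ℝ) : ℂ) = (physHermite ℂ n).eval (y : ℂ) := by
  rw [← physHermite_map (algebraMap ℝ ℂ), eval_map_algebraMap]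
  exact ofReal_eval _ y

lemma wigner1_integrand_hermiteFun (n : ℕ) (x ξ t : ℝ) :
    cexp (-(I / ((1 : ℝ) : ℂ)) * ((t * ξ : ℝ) : ℂ)) * (hermiteFun n (x + t / 2) : ℂ) *
        (starRingEnd ℂ) (hermiteFun n (x - t / 2) : ℂ) =
      (hermiteNormConst n ^ 2 : ℝ) * cexp (-(x ^ 2 + ξ ^ 2)) *
        (((physHermite ℂ n).comp (X + C (x - ξ * I)) *
          (physHermite ℂ n).comp (C (x + ξ * I) - X)).eval (((t / 2 : ℝ) : ℂ) + ξ * I) *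
            cexp (-(((t / 2 : ℝ) : ℂ) + ξ * I) ^ 2)) := by
  have hexp : cexp (-(I / ((1 : ℝ) : ℂ)) * ((t * ξ : ℝ) : ℂ)) *
      cexp (-((x + t / 2 : ℝ) : ℂ) ^ 2 / 2) * cexp (-((x - t / 2 : ℝ) : ℂ) ^ 2 / 2) =
      cexp (-(x ^ 2 + ξ ^ 2)) * cexp (-(((t / 2 : ℝ) : ℂ) + ξ * I) ^ 2) := by
    simp only [← Complex.exp_add]
    congr 1
    push_cast
    linear_combination (ξ : ℂ) ^ 2 * I_sq
  have hplus : ((t / 2 : ℝ) : ℂ) + ξ * I + (x - ξ * I) = ((x + t / 2 : ℝ) : ℂ) := by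
    push_cast; ring
  have hminus :
      (x : ℂ) + ξ * I - (((t / 2 : ℝ) : ℂ) + ξ * I) = ((x - t / 2 : ℝ) : ℂ) := by
    push_cast; ring
  rw [conj_ofReal]
  simp only [hermiteFun_eq, ofReal_mul, ofReal_eval_physHermite, eval_mul, eval_comp, eval_add,
    eval_sub, eval_X, eval_C, hplus, hminus]
  push_cast at hexp ⊢
  linear_combination
    ((hermiteNormConst n : ℂ) ^ 2 * (physHermite ℂ n).eval ((x : ℂ) + t / 2) *
      (physHermite ℂ n).eval ((x : ℂ) - t / 2)) * hexp

theorem wigner_hermite (n : ℕ) (x ξ : ℝ) :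
    wigner1 1 (fun y => (hermiteFun n y : ℂ)) (fun y => (hermiteFun n y : ℂ)) x ξ =
      ((2 * (-1 : ℝ) ^ n * Real.exp (-(x ^ 2 + ξ ^ 2)) *
        laguerreFun n (2 * (x ^ 2 + ξ ^ 2)) : ℝ) : ℂ) := by
  set P :=
    (physHermite ℂ n).comp (X + C (x - ξ * I)) * (physHermite ℂ n).comp (C (x + ξ * I) - X)
  have hlag : (laguerreFun n (2 * (x ^ 2 + ξ ^ 2)) : ℂ) = ∑ k ∈ range (n + 1),
      (n.choose k : ℂ) * (-(2 * (x - ξ * I) * (x + ξ * I))) ^ k / k.factorial := by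
    simp only [laguerreFun]
    push_cast
    congr! 4
    linear_combination (-2 * (ξ : ℂ) ^ 2) * I_sq
  have hsubst := Measure.integral_comp_div
    (fun s : ℝ => P.eval ((s : ℂ) + ξ * I) * cexp (-((s : ℂ) + ξ * I) ^ 2)) 2
  have hnorm := congrArg ((↑) : ℝ → ℂ) (hermiteNormConst_sq_mul n)
  rw [wigner1]
  simp_rw [wigner1_integrand_hermiteFun]
  rw [integral_const_mul, hsubst, ← gaussianLineIntegral_apply,
    gaussianLineIntegral_physHermite_comp_mul, ← hlag, abs_two, real_smul, neg_pow]
  push_cast at hnorm ⊢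
  linear_combination (2 * (-1) ^ n * cexp (-(↑x ^ 2 + ↑ξ ^ 2)) *
    (laguerreFun n (2 * (x ^ 2 + ξ ^ 2)) : ℂ)) * hnorm
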